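/- arXiv:1406.3228 — 3 statements merged into one kernel-verified Lean document; each statement's English description precedes it below -/
import Mathlib

section
/- The escape time map t : G × S → ℝ, t(x,ω) = inf{s > 0 : x − sω ∉ G}, is lower semicontinuous on G × S. -/
open MeasureTheory Metric Set Filter
open scoped ENNReal RealInnerProductSpace Topology

noncomputable section

/-- Euclidean three-space ℝ³. -/
abbrev E3 : Type := EuclideanSpace ℝ (Fin 3)

/-- The unit sphere `S ⊂ ℝ³`. -/
def sphS : Set E3 := Metric.sphere (0 : E3) 1

/-- The escape time `t(x,ω) = inf {s > 0 : x − sω ∉ G}`. -/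
def escTime (G : Set E3) (x ω : E3) : ℝ := sInf {s : ℝ | 0 < s ∧ x - s • ω ∉ G}

/-- The set of exit times is nonempty when `G` is bounded and `ω` is a unit vector. -/
lemma escSet_nonempty (G : Set E3) (hGb : Bornology.IsBounded G) (x ω : E3)
    (hω : ‖ω‖ = 1) : {s : ℝ | 0 < s ∧ x - s • ω ∉ G}.Nonempty := by
  obtain ⟨R, hR⟩ := hGb.subset_closedBall 0
  refine ⟨‖x‖ + |R| + 1, by positivity, fun hmem => ?_⟩
  have h1 : ‖x - (‖x‖ + |R| + 1) • ω‖ ≤ R := by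
    simpa using mem_closedBall_zero_iff.mp (hR hmem)
  have h2 : ‖(‖x‖ + |R| + 1) • ω‖ - ‖x‖ ≤ ‖x - (‖x‖ + |R| + 1) • ω‖ := by
    rw [norm_sub_rev]; exact norm_sub_norm_le _ _
  have h3 : ‖(‖x‖ + |R| + 1) • ω‖ = ‖x‖ + |R| + 1 := by
    rw [norm_smul, hω, mul_one, Real.norm_eq_abs, abs_of_pos (by positivity)]
  have : R < R := by
    calc R < |R| + 1 := by cases abs_cases R <;> linarith
    _ = ‖(‖x‖ + |R| + 1) • ω‖ - ‖x‖ := by rw [h3]; ring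
    _ ≤ ‖x - (‖x‖ + |R| + 1) • ω‖ := h2
    _ ≤ R := h1
  exact absurd this (lt_irrefl R)

lemma escSet_bddBelow (G : Set E3) (x ω : E3) :
    BddBelow {s : ℝ | 0 < s ∧ x - s • ω ∉ G} :=
  ⟨0, fun s hs => hs.1.le⟩

/-- The escape time map `t(x,ω) = inf{s > 0 : x − sω ∉ G}` is lower
semicontinuous on `G × S`, where `G` is an open bounded subset of `ℝ³` and `S` is the
unit sphere of `ℝ³`. -/
theorem escTime_lowerSemicontinuousOn
    (G : Set E3) (hG : IsOpen G) (hGb : Bornology.IsBounded G) :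
    LowerSemicontinuousOn (fun p : E3 × E3 => escTime G p.1 p.2) (G ×ˢ sphS) := by
  rintro ⟨x, ω⟩ ⟨hx, hω⟩ c hc
  have hω1 : ‖ω‖ = 1 := by simpa [sphS] using hω
  simp only [escTime] at hc
  -- Step 1: escTime G x ω > 0
  obtain ⟨ε, hε, hball⟩ := Metric.isOpen_iff.mp hG x hx
  have hεle : ε ≤ escTime G x ω := by
    apply le_csInf (escSet_nonempty G hGb x ω hω1)
    intro s hs
    by_contra h
    push_neg at h
    exact hs.2 (hball (by
      simp only [mem_ball, dist_eq_norm]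
      have : ‖x - s • ω - x‖ = s := by
        rw [show x - s • ω - x = -(s • ω) by abel, norm_neg, norm_smul, hω1,
          mul_one, Real.norm_eq_abs, abs_of_pos hs.1]
      rw [this]; exact h))
  have ht0 : 0 < escTime G x ω := lt_of_lt_of_le hε hεle
  -- Step 2: choose c' with max c 0 < c' < escTime G x ω
  obtain ⟨c', hc'1, hc'2⟩ := exists_between (show max c 0 < escTime G x ω from
    max_lt hc ht0)
  have hc'pos : 0 < c' := lt_of_le_of_lt (le_max_right c 0) hc'1
  have hcc' : c < c' := lt_of_le_of_lt (le_max_left c 0) hc'1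
  -- Step 3: the segment K = {x - s ω : s ∈ [0, c']} is a compact subset of G
  set K : Set E3 := (fun s : ℝ => x - s • ω) '' Set.Icc 0 c' with hK
  have hKcompact : IsCompact K :=
    (isCompact_Icc).image (continuous_const.sub (continuous_id.smul continuous_const))
  have hKsub : K ⊆ G := by
    rintro _ ⟨s, ⟨hs0, hsc⟩, rfl⟩
    by_contra hout
    rcases eq_or_lt_of_le hs0 with h | h
    · exact hout (by simpa [← h] using hx)
    · have : s ∈ {s : ℝ | 0 < s ∧ x - s • ω ∉ G} := ⟨h, hout⟩
      have := csInf_le (escSet_bddBelow G x ω) this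
      have : escTime G x ω ≤ c' := le_trans this hsc
      linarith
  obtain ⟨δ, hδ, hthick⟩ := hKcompact.exists_thickening_subset_open hG hKsub
  -- Step 4: the neighborhood
  rw [eventually_nhdsWithin_iff]
  have hδ' : 0 < δ / (2 * (c' + 1)) := by positivity
  filter_upwards [Metric.ball_mem_nhds (x, ω) hδ'] with q hq hqmem
  obtain ⟨hy, hη⟩ := hqmem
  obtain ⟨y, η⟩ := q
  have hη1 : ‖η‖ = 1 := by simpa [sphS] using hη
  simp only [mem_ball, Prod.dist_eq, max_lt_iff] at hq
  obtain ⟨hq1, hq2⟩ := hq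
  rw [dist_eq_norm] at hq1 hq2
  -- for all s ∈ [0, c'], y - s η ∈ G
  have hseg : ∀ s ∈ Set.Icc (0:ℝ) c', y - s • η ∈ G := by
    intro s ⟨hs0, hsc⟩
    apply hthick
    have hd : dist (y - s • η) (x - s • ω) < δ := by
      rw [dist_eq_norm]
      have : y - s • η - (x - s • ω) = (y - x) + s • (ω - η) := by
        rw [smul_sub]; abel
      rw [this]
      calc ‖(y - x) + s • (ω - η)‖ ≤ ‖y - x‖ + ‖s • (ω - η)‖ := norm_add_le _ _
      _ = ‖y - x‖ + s * ‖ω - η‖ := by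
          rw [norm_smul, Real.norm_eq_abs, abs_of_nonneg hs0]
      _ < δ / (2 * (c' + 1)) + c' * (δ / (2 * (c' + 1))) := by
          have h1 : ‖y - x‖ < δ / (2 * (c' + 1)) := hq1
          have h2 : ‖ω - η‖ < δ / (2 * (c' + 1)) := by
            rw [norm_sub_rev]; exact hq2
          have h3 : s * ‖ω - η‖ ≤ c' * ‖ω - η‖ :=
            mul_le_mul_of_nonneg_right hsc (norm_nonneg _)
          have h4 : c' * ‖ω - η‖ ≤ c' * (δ / (2 * (c' + 1))) := by
            nlinarith [norm_nonneg (ω - η)]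
          by_cases hc0 : ‖ω - η‖ = 0
          · rw [hc0]; nlinarith
          · have : 0 < ‖ω - η‖ := lt_of_le_of_ne (norm_nonneg _) (Ne.symm hc0)
            nlinarith
      _ = (1 + c') * (δ / (2 * (c' + 1))) := by ring
      _ = δ / 2 := by
          have hne : c' + 1 ≠ 0 := by positivity
          field_simp
          ring
      _ ≤ δ := by linarith
    exact Metric.mem_thickening_iff.mpr ⟨x - s • ω, ⟨s, ⟨hs0, hsc⟩, rfl⟩, hd⟩
  -- conclude: escTime G y η ≥ c' > c
  have : c' ≤ escTime G y η := by
    apply le_csInf (escSet_nonempty G hGb y η hη1)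
    intro s hs
    by_contra h
    push_neg at h
    exact hs.2 (hseg s ⟨hs.1.le, h.le⟩)
  exact lt_of_lt_of_le hcc' this
end
end

section
/- The escape time map t(x,ω) = inf{s > 0 : x − sω ∉ G} is continuous on G × S if and only if G is convex. Moreover, when G is convex, for every (x₀,ω₀) ∈ G × S, setting y₀ = x₀ − t(x₀,ω₀)ω₀ ∈ ∂G, one has lim_{(x,ω)→(y₀,ω₀), (x,ω)∈G×S} t(x,ω) = 0. -/
open MeasureTheory Metric Set Filter
open scoped ENNReal RealInnerProductSpace Topology

noncomputable section

/-!
For any bounded open `G` the escape time is lower semicontinuous on `G × S`: a compact initial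
segment of a ray inside `G` stays inside `G` when the ray is perturbed slightly. For convex
`G` it is also upper semicontinuous, because every point of the ray beyond the exit point lies
outside `closure G`; the same fact makes the escape time vanish near the exit point.

Conversely, if the escape time is continuous, fix `a ∈ G` and consider the set of `y` with
`[a, y] ⊆ G`. It is open, and for `y ≠ a` membership reads `‖y - a‖ ≤ t(y, (y - a)/‖y - a‖)`,
a condition that is closed in `G \ {a}` by continuity. Connectedness of `G` then forces it to
contain `G`, so `G` is star-shaped about each of its points.
-/

open scoped Convex

section Segments

variable {E : Type*} [NormedAddCommGroup E] [NormedSpace ℝ E]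

theorem Convex.sub_smul_mem_of_sub_smul_mem_closure {G : Set E} (hconv : Convex ℝ G)
    (hG : IsOpen G) {x ω : E} {s u : ℝ} (hx : x ∈ G) (hs : x - s • ω ∈ closure G)
    (hu : 0 ≤ u) (hus : u < s) : x - u • ω ∈ G := by
  have hs0 : 0 < s := hu.trans_lt hus
  have ht : 1 - u / s ∈ Ioc (0 : ℝ) 1 :=
    ⟨by rw [sub_pos, div_lt_one hs0]; exact hus, by linarith [div_nonneg hu hs0.le]⟩
  have hmem := hconv.add_smul_sub_mem_interior' hs (hG.interior_eq.symm ▸ hx) ht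
  rw [hG.interior_eq, sub_sub_cancel, smul_smul, sub_mul, div_mul_cancel₀ u hs0.ne',
    one_mul, sub_smul] at hmem
  convert hmem using 1
  abel

theorem isOpen_setOf_segment_subset {U : Set E} (hU : IsOpen U) (a : E) :
    IsOpen {y | [a -[ℝ] y] ⊆ U} := by
  simp only [segment_eq_image', image_subset_iff]
  refine isOpen_iff_eventually.2 fun y hy =>
    isCompact_Icc.eventually_forall_of_forall_eventually fun θ hθ => ?_
  exact (by fun_prop : Continuous fun p : E × ℝ => a + p.2 • (p.1 - a)).continuousAt
    |>.preimage_mem_nhds (hU.mem_nhds (hy hθ))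

theorem eventually_forall_Icc_sub_smul_mem {U : Set E} (hU : IsOpen U) {x ω : E} {s : ℝ}
    (h : ∀ u ∈ Icc 0 s, x - u • ω ∈ U) :
    ∀ᶠ p : E × E in 𝓝 (x, ω), ∀ u ∈ Icc 0 s, p.1 - u • p.2 ∈ U :=
  isCompact_Icc.eventually_forall_of_forall_eventually fun u hu =>
    (by fun_prop : Continuous fun q : (E × E) × ℝ => q.1.1 - q.2 • q.1.2).continuousAt
      |>.preimage_mem_nhds (hU.mem_nhds (h u hu))

theorem openSegment_eq_image_sub_smul {x y : E} (hxy : x ≠ y) :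
    openSegment ℝ x y = (fun u : ℝ => x - u • (‖x - y‖⁻¹ • (x - y))) '' Ioo 0 ‖x - y‖ := by
  have hd : 0 < ‖x - y‖ := norm_pos_iff.2 (sub_ne_zero.2 hxy)
  have hIoo : Ioo (0 : ℝ) 1 = (· * ‖x - y‖⁻¹) '' Ioo 0 ‖x - y‖ := by
    rw [image_mul_right_Ioo _ _ (inv_pos.2 hd), zero_mul, mul_inv_cancel₀ hd.ne']
  rw [openSegment_eq_image', hIoo, image_image]
  exact image_congr fun u _ => by module

end Segments

section EscapeTime

variable {G : Set E3} {x ω : E3}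

theorem escTime_nonneg (G : Set E3) (x ω : E3) : 0 ≤ escTime G x ω :=
  Real.sInf_nonneg fun _ hs => hs.1.le

theorem escTime_le {s : ℝ} (hs : 0 < s) (h : x - s • ω ∉ G) : escTime G x ω ≤ s :=
  csInf_le ⟨0, fun _ hu => hu.1.le⟩ ⟨hs, h⟩

theorem exists_sub_smul_notMem (hGb : Bornology.IsBounded G) (hω : ω ≠ 0) (x : E3) :
    ∃ s : ℝ, 0 < s ∧ x - s • ω ∉ G := by
  obtain ⟨R, hR⟩ := hGb.subset_closedBall x
  have hω' : 0 < ‖ω‖ := norm_pos_iff.2 hω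
  refine ⟨(|R| + 1) / ‖ω‖, by positivity, fun h => ?_⟩
  have hdist := hR h
  rw [mem_closedBall, dist_eq_norm, sub_sub_cancel_left, norm_neg, norm_smul,
    Real.norm_of_nonneg (by positivity), div_mul_cancel₀ _ hω'.ne'] at hdist
  linarith [le_abs_self R]

theorem le_escTime (hne : ∃ s : ℝ, 0 < s ∧ x - s • ω ∉ G) {s : ℝ}
    (h : ∀ u ∈ Ioo 0 s, x - u • ω ∈ G) : s ≤ escTime G x ω :=
  le_csInf hne fun v hv => not_lt.1 fun hvs => hv.2 (h v ⟨hv.1, hvs⟩)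

theorem sub_smul_mem_of_lt_escTime (hx : x ∈ G) {u : ℝ} (hu : 0 ≤ u)
    (h : u < escTime G x ω) : x - u • ω ∈ G := by
  rcases hu.eq_or_lt with rfl | hu
  · simpa using hx
  · by_contra hnot
    exact (escTime_le hu hnot).not_gt h

theorem sub_escTime_smul_notMem (hG : IsOpen G) (hx : x ∈ G)
    (hne : ∃ s : ℝ, 0 < s ∧ x - s • ω ∉ G) : x - escTime G x ω • ω ∉ G := by
  -- Since `x ∈ G`, the defining set is the closed set `{s ≥ 0 | x - s • ω ∉ G}`.
  have hset : {s : ℝ | 0 < s ∧ x - s • ω ∉ G} = {s | 0 ≤ s ∧ x - s • ω ∉ G} := by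
    ext s
    refine ⟨fun h => ⟨h.1.le, h.2⟩, fun h => ⟨h.1.lt_of_ne ?_, h.2⟩⟩
    rintro rfl
    exact h.2 (by simpa using hx)
  have hclosed : IsClosed {s : ℝ | 0 ≤ s ∧ x - s • ω ∉ G} :=
    isClosed_Ici.inter (hG.isClosed_compl.preimage (by fun_prop))
  have hmem := hclosed.csInf_mem (hset ▸ hne) ⟨0, fun _ hs => hs.1⟩
  rw [← hset] at hmem
  exact hmem.2

theorem eventually_escTime_le {s : ℝ} (hs : 0 < s) (h : x - s • ω ∉ closure G) :
    ∀ᶠ p : E3 × E3 in 𝓝 (x, ω), escTime G p.1 p.2 ≤ s := by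
  have hout : ∀ᶠ p : E3 × E3 in 𝓝 (x, ω), p.1 - s • p.2 ∈ (closure G)ᶜ :=
    (by fun_prop : Continuous fun p : E3 × E3 => p.1 - s • p.2).continuousAt
      |>.preimage_mem_nhds (isClosed_closure.isOpen_compl.mem_nhds h)
  filter_upwards [hout] with p hp using escTime_le hs fun hp' => hp (subset_closure hp')

theorem eventually_lt_escTime (hG : IsOpen G) (hGb : Bornology.IsBounded G) (hx : x ∈ G)
    (hω : ω ≠ 0) {c : ℝ} (hc : c < escTime G x ω) :
    ∀ᶠ p : E3 × E3 in 𝓝 (x, ω), c < escTime G p.1 p.2 := by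
  obtain ⟨c', hcc', hc'⟩ := exists_between hc
  have hray : ∀ u ∈ Icc 0 c', x - u • ω ∈ G := fun u hu =>
    sub_smul_mem_of_lt_escTime hx hu.1 (hu.2.trans_lt hc')
  filter_upwards [eventually_forall_Icc_sub_smul_mem hG hray,
    (continuous_snd.tendsto (x, ω)).eventually_ne hω] with p hp hp₂
  exact hcc'.trans_le
    (le_escTime (exists_sub_smul_notMem hGb hp₂ p.1) fun u hu => hp u (Ioo_subset_Icc_self hu))

theorem sub_smul_notMem_closure_of_escTime_lt (hconv : Convex ℝ G) (hG : IsOpen G)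
    (hx : x ∈ G) (hne : ∃ s : ℝ, 0 < s ∧ x - s • ω ∉ G) {s : ℝ} (hs : escTime G x ω < s) :
    x - s • ω ∉ closure G := fun hcl =>
  sub_escTime_smul_notMem hG hx hne
    (hconv.sub_smul_mem_of_sub_smul_mem_closure hG hx hcl (escTime_nonneg G x ω) hs)

theorem eventually_escTime_lt (hconv : Convex ℝ G) (hG : IsOpen G)
    (hGb : Bornology.IsBounded G) (hx : x ∈ G) (hω : ω ≠ 0) {c : ℝ} (hc : escTime G x ω < c) :
    ∀ᶠ p : E3 × E3 in 𝓝 (x, ω), escTime G p.1 p.2 < c := by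
  obtain ⟨s, hTs, hsc⟩ := exists_between hc
  filter_upwards [eventually_escTime_le ((escTime_nonneg G x ω).trans_lt hTs)
    (sub_smul_notMem_closure_of_escTime_lt hconv hG hx (exists_sub_smul_notMem hGb hω x) hTs)]
    with p hp using hp.trans_lt hsc

theorem continuousAt_escTime (hconv : Convex ℝ G) (hG : IsOpen G)
    (hGb : Bornology.IsBounded G) (hx : x ∈ G) (hω : ω ≠ 0) :
    ContinuousAt (fun p : E3 × E3 => escTime G p.1 p.2) (x, ω) :=
  tendsto_order.2 ⟨fun _ hc => eventually_lt_escTime hG hGb hx hω hc,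
    fun _ hc => eventually_escTime_lt hconv hG hGb hx hω hc⟩

theorem tendsto_escTime_exit_zero (hconv : Convex ℝ G) (hG : IsOpen G)
    (hGb : Bornology.IsBounded G) (hx : x ∈ G) (hω : ω ≠ 0) :
    Tendsto (fun p : E3 × E3 => escTime G p.1 p.2)
      (𝓝 (x - escTime G x ω • ω, ω)) (𝓝 0) := by
  refine tendsto_order.2 ⟨fun c hc => Eventually.of_forall fun p =>
    hc.trans_le (escTime_nonneg G p.1 p.2), fun c hc => ?_⟩
  obtain ⟨s, hs0, hsc⟩ := exists_between hc
  have hout : x - escTime G x ω • ω - s • ω ∉ closure G := by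
    rw [sub_sub, ← add_smul]
    exact sub_smul_notMem_closure_of_escTime_lt hconv hG hx (exists_sub_smul_notMem hGb hω x)
      (lt_add_of_pos_right _ hs0)
  filter_upwards [eventually_escTime_le hs0 hout] with p hp using hp.trans_lt hsc

theorem segment_subset_iff_le_escTime (hGb : Bornology.IsBounded G) {a z : E3} (ha : a ∈ G)
    (hz : z ∈ G) (hza : z ≠ a) :
    [a -[ℝ] z] ⊆ G ↔ ‖z - a‖ ≤ escTime G z (‖z - a‖⁻¹ • (z - a)) := by
  have hω : ‖z - a‖⁻¹ • (z - a) ≠ 0 := by simp [sub_ne_zero.2 hza]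
  rw [segment_symm, ← insert_endpoints_openSegment, insert_subset_iff, insert_subset_iff,
    openSegment_eq_image_sub_smul hza, image_subset_iff]
  simp only [hz, ha, true_and]
  exact ⟨le_escTime (exists_sub_smul_notMem hGb hω z),
    fun h u hu => sub_smul_mem_of_lt_escTime hz hu.1.le (hu.2.trans_le h)⟩

theorem closure_setOf_segment_subset_inter_subset (hG : IsOpen G) (hGb : Bornology.IsBounded G)
    (hcont : ContinuousOn (fun p : E3 × E3 => escTime G p.1 p.2) (G ×ˢ sphS)) {a : E3}
    (ha : a ∈ G) : closure {z | [a -[ℝ] z] ⊆ G} ∩ G ⊆ {z | [a -[ℝ] z] ⊆ G} := by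
  rintro y ⟨hcl, hy⟩
  rcases eq_or_ne y a with rfl | hya
  · simpa using hy
  have hV : IsOpen (G \ {a}) := hG.sdiff isClosed_singleton
  have hdir : ContinuousWithinAt (fun z => escTime G z (‖z - a‖⁻¹ • (z - a))) (G \ {a}) y := by
    refine (hcont _ ⟨hy, ?_⟩).comp (f := fun z => (z, ‖z - a‖⁻¹ • (z - a))) ?_ ?_
    · simpa [sphS] using norm_smul_inv_norm (𝕜 := ℝ) (sub_ne_zero.2 hya)
    · have : ‖y - a‖ ≠ 0 := norm_ne_zero_iff.2 (sub_ne_zero.2 hya)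
      fun_prop (disch := assumption)
    · intro z hz
      exact ⟨hz.1, by simpa [sphS] using norm_smul_inv_norm (𝕜 := ℝ) (sub_ne_zero.2 hz.2)⟩
  change [a -[ℝ] y] ⊆ G
  rw [segment_subset_iff_le_escTime hGb ha hy hya]
  exact ContinuousWithinAt.closure_le (hV.inter_closure ⟨⟨hy, hya⟩, hcl⟩)
    (by fun_prop : Continuous fun z : E3 => ‖z - a‖).continuousWithinAt
    (hdir.mono inter_subset_left)
    fun z hz => (segment_subset_iff_le_escTime hGb ha hz.1.1 hz.1.2).1 hz.2

theorem convex_of_continuousOn_escTime (hG : IsOpen G) (hGb : Bornology.IsBounded G)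
    (hGc : IsPreconnected G)
    (hcont : ContinuousOn (fun p : E3 × E3 => escTime G p.1 p.2) (G ×ˢ sphS)) :
    Convex ℝ G := fun a ha =>
  starConvex_iff_segment_subset.2 fun _ hy =>
    hGc.subset_of_closure_inter_subset (isOpen_setOf_segment_subset hG a)
      ⟨a, ha, by simpa using ha⟩
      (closure_setOf_segment_subset_inter_subset hG hGb hcont ha) hy

end EscapeTime

/-- For an open bounded connected `G ⊆ ℝ³`, the escape time map
`t(x,ω) = inf{s > 0 : x − sω ∉ G}` is continuous on `G × S` if and only if `G` is convex.
Moreover, when `G` is convex, for every `(x₀,ω₀) ∈ G × S`, setting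
`y₀ = x₀ − t(x₀,ω₀)ω₀ ∈ ∂G`, one has `t(x,ω) → 0` as `(x,ω) → (y₀,ω₀)` within `G × S`. -/
theorem escTime_continuousOn_iff_convex
    (G : Set E3) (hG : IsOpen G) (hGb : Bornology.IsBounded G) (hGc : IsConnected G) :
    (ContinuousOn (fun p : E3 × E3 => escTime G p.1 p.2) (G ×ˢ sphS) ↔ Convex ℝ G) ∧
    (Convex ℝ G → ∀ x₀ ∈ G, ∀ ω₀ ∈ sphS,
      Tendsto (fun p : E3 × E3 => escTime G p.1 p.2)
        (𝓝[G ×ˢ sphS] (x₀ - escTime G x₀ ω₀ • ω₀, ω₀)) (𝓝 (0 : ℝ))) := by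
  have hne : ∀ ω ∈ sphS, ω ≠ 0 := fun ω hω => ne_zero_of_mem_unit_sphere ⟨ω, hω⟩
  refine ⟨⟨convex_of_continuousOn_escTime hG hGb hGc.isPreconnected, fun hconv => ?_⟩,
    fun hconv x₀ hx₀ ω₀ hω₀ => ?_⟩
  · exact fun p hp => (continuousAt_escTime hconv hG hGb hp.1 (hne _ hp.2)).continuousWithinAt
  · exact (tendsto_escTime_exit_zero hconv hG hGb hx₀ (hne ω₀ hω₀)).mono_left nhdsWithin_le_nhds
end
end

section
/- Let Y₁, Y₂ be real Banach spaces and Y = Y₁ × Y₂ with norm ‖(y₁,y₂)‖ = ‖y₁‖ + ‖y₂‖, whose dual is identified with Y₁* × Y₂* with norm ‖(l₁,l₂)‖ = max(‖l₁‖,‖l₂‖). For y = (y₁,y₂) ∈ Y the duality set satisfies: if y₁ ≠ 0 and y₂ ≠ 0 then J_Y(y) = J_{Y₁}(z₁(y)) × J_{Y₂}(z₂(y)) where z_j(y) = (‖y‖/‖y_j‖) y_j; if y₁ = 0 then J_Y(y) = B̄_{Y₁*}(‖y₂‖) × J_{Y₂}(y₂); if y₂ = 0 then J_Y(y) = J_{Y₁}(y₁)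 × B̄_{Y₂*}(‖y₁‖), where B̄_{X*}(r) is the closed ball of radius r in X*. -/
open Metric Set

noncomputable section

/-- The duality set `J_X(x) = {l ∈ X* : ‖l‖ = ‖x‖ and l(x) = ‖x‖‖l‖}` of an element `x`
of a real normed space `X`. -/
def dualitySet (X : Type*) [NormedAddCommGroup X] [NormedSpace ℝ X] (x : X) :
    Set (X →L[ℝ] ℝ) :=
  {l | ‖l‖ = ‖x‖ ∧ l x = ‖x‖ * ‖l‖}

lemma apply_le_norm_mul {X : Type*} [NormedAddCommGroup X] [NormedSpace ℝ X]
    (l : X →L[ℝ] ℝ) (x : X) : l x ≤ ‖l‖ * ‖x‖ :=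
  (le_abs_self _).trans (by simpa [Real.norm_eq_abs] using l.le_opNorm x)

/-- Let `Y₁, Y₂` be real Banach spaces and `Y = Y₁ × Y₂` with the
1-norm `‖(y₁,y₂)‖ = ‖y₁‖ + ‖y₂‖`, whose dual is identified with `Y₁* × Y₂*` carrying the
max-norm, a functional `(l₁,l₂)` acting by `(l₁,l₂)(y₁,y₂) = l₁ y₁ + l₂ y₂`.  Under this
identification the duality set of `y = (y₁,y₂)` is
`J_Y(y) = {(l₁,l₂) : max(‖l₁‖,‖l₂‖) = ‖y₁‖ + ‖y₂‖ ∧ l₁ y₁ + l₂ y₂ = (‖y₁‖+‖y₂‖)·max(‖l₁‖,‖l₂‖)}`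
and it satisfies: if `y₁ ≠ 0` and `y₂ ≠ 0` then `J_Y(y) = J_{Y₁}(z₁(y)) × J_{Y₂}(z₂(y))`
where `z_j(y) = ((‖y₁‖+‖y₂‖)/‖y_j‖) y_j`; if `y₁ = 0` then
`J_Y(y) = B̄_{Y₁*}(‖y₂‖) × J_{Y₂}(y₂)`; and if `y₂ = 0` then
`J_Y(y) = J_{Y₁}(y₁) × B̄_{Y₂*}(‖y₁‖)`. -/
theorem dualitySet_prod
    (Y₁ Y₂ : Type*) [NormedAddCommGroup Y₁] [NormedSpace ℝ Y₁] [CompleteSpace Y₁]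
    [NormedAddCommGroup Y₂] [NormedSpace ℝ Y₂] [CompleteSpace Y₂]
    (y₁ : Y₁) (y₂ : Y₂) :
    (y₁ ≠ 0 → y₂ ≠ 0 →
      {l : (Y₁ →L[ℝ] ℝ) × (Y₂ →L[ℝ] ℝ) |
          max ‖l.1‖ ‖l.2‖ = ‖y₁‖ + ‖y₂‖ ∧
          l.1 y₁ + l.2 y₂ = (‖y₁‖ + ‖y₂‖) * max ‖l.1‖ ‖l.2‖}
        = dualitySet Y₁ (((‖y₁‖ + ‖y₂‖) / ‖y₁‖) • y₁) ×ˢ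
          dualitySet Y₂ (((‖y₁‖ + ‖y₂‖) / ‖y₂‖) • y₂)) ∧
    (y₁ = 0 →
      {l : (Y₁ →L[ℝ] ℝ) × (Y₂ →L[ℝ] ℝ) |
          max ‖l.1‖ ‖l.2‖ = ‖y₁‖ + ‖y₂‖ ∧
          l.1 y₁ + l.2 y₂ = (‖y₁‖ + ‖y₂‖) * max ‖l.1‖ ‖l.2‖}
        = closedBall (0 : Y₁ →L[ℝ] ℝ) ‖y₂‖ ×ˢ dualitySet Y₂ y₂) ∧
    (y₂ = 0 →
      {l : (Y₁ →L[ℝ] ℝ) × (Y₂ →L[ℝ] ℝ) |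
          max ‖l.1‖ ‖l.2‖ = ‖y₁‖ + ‖y₂‖ ∧
          l.1 y₁ + l.2 y₂ = (‖y₁‖ + ‖y₂‖) * max ‖l.1‖ ‖l.2‖}
        = dualitySet Y₁ y₁ ×ˢ closedBall (0 : Y₂ →L[ℝ] ℝ) ‖y₁‖) := by
  refine ⟨?_, ?_, ?_⟩
  · intro h1 h2
    have hy1 : (0:ℝ) < ‖y₁‖ := norm_pos_iff.mpr h1
    have hy2 : (0:ℝ) < ‖y₂‖ := norm_pos_iff.mpr h2
    set s : ℝ := ‖y₁‖ + ‖y₂‖ with hs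
    have hsp : 0 < s := by positivity
    have hz1 : ‖((s / ‖y₁‖) • y₁)‖ = s := by
      rw [norm_smul, Real.norm_eq_abs, abs_of_pos (by positivity), div_mul_cancel₀ _ hy1.ne']
    have hz2 : ‖((s / ‖y₂‖) • y₂)‖ = s := by
      rw [norm_smul, Real.norm_eq_abs, abs_of_pos (by positivity), div_mul_cancel₀ _ hy2.ne']
    ext l
    simp only [mem_setOf_eq, mem_prod, dualitySet, hz1, hz2, ContinuousLinearMap.map_smul,
      smul_eq_mul]
    constructor
    · rintro ⟨hmax, heq⟩
      have hl1 : ‖l.1‖ ≤ s := hmax ▸ le_max_left _ _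
      have hl2 : ‖l.2‖ ≤ s := hmax ▸ le_max_right _ _
      rw [hmax] at heq
      have k1 := apply_le_norm_mul l.1 y₁
      have k2 := apply_le_norm_mul l.2 y₂
      have b1 : l.1 y₁ ≤ s * ‖y₁‖ := by nlinarith
      have b2 : l.2 y₂ ≤ s * ‖y₂‖ := by nlinarith
      have e1 : l.1 y₁ = s * ‖y₁‖ := by nlinarith
      have e2 : l.2 y₂ = s * ‖y₂‖ := by nlinarith
      have n1 : ‖l.1‖ = s := le_antisymm hl1 (by nlinarith)
      have n2 : ‖l.2‖ = s := le_antisymm hl2 (by nlinarith)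
      refine ⟨⟨n1, ?_⟩, ⟨n2, ?_⟩⟩
      · rw [e1, n1]; field_simp
      · rw [e2, n2]; field_simp
    · rintro ⟨⟨n1, e1⟩, ⟨n2, e2⟩⟩
      rw [n1] at e1
      rw [n2] at e2
      have e1' : l.1 y₁ = s * ‖y₁‖ := by
        have h : (s / ‖y₁‖) * l.1 y₁ = (s / ‖y₁‖) * (s * ‖y₁‖) := by
          rw [e1]; field_simp
        exact mul_left_cancel₀ (by positivity) h
      have e2' : l.2 y₂ = s * ‖y₂‖ := by
        have h : (s / ‖y₂‖) * l.2 y₂ = (s / ‖y₂‖) * (s * ‖y₂‖) := by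
          rw [e2]; field_simp
        exact mul_left_cancel₀ (by positivity) h
      have hm : max ‖l.1‖ ‖l.2‖ = s := by rw [n1, n2, max_self]
      refine ⟨hm, ?_⟩
      rw [hm, e1', e2']; ring
  · intro h1
    subst h1
    simp only [norm_zero, zero_add, map_zero]
    ext l
    simp only [mem_setOf_eq, mem_prod, dualitySet, mem_closedBall_zero_iff, zero_add]
    constructor
    · rintro ⟨hmax, heq⟩
      have hl1 : ‖l.1‖ ≤ ‖y₂‖ := hmax ▸ le_max_left _ _
      have hl2 : ‖l.2‖ ≤ ‖y₂‖ := hmax ▸ le_max_right _ _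
      rw [hmax] at heq
      have k2 := apply_le_norm_mul l.2 y₂
      have n2 : ‖l.2‖ = ‖y₂‖ := le_antisymm hl2 (by nlinarith [norm_nonneg l.2, norm_nonneg y₂])
      exact ⟨hl1, n2, by rw [heq, n2]⟩
    · rintro ⟨hb, n2, e2⟩
      have hm : max ‖l.1‖ ‖l.2‖ = ‖y₂‖ := by rw [n2]; exact max_eq_right hb
      exact ⟨hm, by rw [hm, e2, n2]⟩
  · intro h2
    subst h2
    simp only [norm_zero, add_zero, map_zero]
    ext l
    simp only [mem_setOf_eq, mem_prod, dualitySet, mem_closedBall_zero_iff, add_zero]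
    constructor
    · rintro ⟨hmax, heq⟩
      have hl1 : ‖l.1‖ ≤ ‖y₁‖ := hmax ▸ le_max_left _ _
      have hl2 : ‖l.2‖ ≤ ‖y₁‖ := hmax ▸ le_max_right _ _
      rw [hmax] at heq
      have k1 := apply_le_norm_mul l.1 y₁
      have n1 : ‖l.1‖ = ‖y₁‖ := le_antisymm hl1 (by nlinarith [norm_nonneg l.1, norm_nonneg y₁])
      exact ⟨⟨n1, by rw [heq, n1]⟩, hl2⟩
    · rintro ⟨⟨n1, e1⟩, hb⟩
      have hm : max ‖l.1‖ ‖l.2‖ = ‖y₁‖ := by rw [n1]; exact max_eq_left hb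
      exact ⟨hm, by rw [hm, e1, n1]⟩
end
end
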